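/- Let V be a finite-dimensional real inner product space and let A_1, A_2, B_1, B_2 be symmetric linear endomorphisms of V such that G_{A_1} + G_{A_2} = G_{B_1} + G_{B_2} as quadrilinear forms and A_1² + A_2² = B_1² + B_2². Set μ = √((tr A_1)² + (tr A_2)²) and assume μ ≠ 0. Define A_η = ((tr A_1)·A_1 + (tr A_2)·A_2)/μ, A_ξ = ((tr A_1)·A_2 − (tr A_2)·A_1)/μ, and similarly B_η̄ = ((tr B_1)·B_1 + (tr B_2)·B_2)/μ, B_ξ̄ = ((tr B_1)·B_2 − (tr B_2)·B_1)/μ. Then A_η = B_η̄, tr A_ξ = 0 = tr B_ξ̄, and A_ξ² = B_ξ̄². -/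
import Mathlib

open scoped RealInnerProductSpace

/-- The Gauss tensor of an endomorphism `A` of a real inner product space:
`G_A(X,Y,Z,W) = ⟪AX,W⟫⟪AY,Z⟫ − ⟪AX,Z⟫⟪AY,W⟫`. -/
noncomputable def gaussTensor {V : Type*} [NormedAddCommGroup V]
    [InnerProductSpace ℝ V] (A : V →ₗ[ℝ] V) (X Y Z W : V) : ℝ :=
  ⟪A X, W⟫ * ⟪A Y, Z⟫ - ⟪A X, Z⟫ * ⟪A Y, W⟫

lemma trace_eq_sum_inner' {V : Type*} [NormedAddCommGroup V]
    [InnerProductSpace ℝ V] [FiniteDimensional ℝ V] (T : V →ₗ[ℝ] V) :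
    LinearMap.trace ℝ V T =
      ∑ i, ⟪stdOrthonormalBasis ℝ V i, T (stdOrthonormalBasis ℝ V i)⟫ := by
  set b := stdOrthonormalBasis ℝ V
  rw [LinearMap.trace_eq_matrix_trace ℝ b.toBasis, Matrix.trace]
  congr 1
  ext i
  rw [Matrix.diag_apply, LinearMap.toMatrix_apply, b.coe_toBasis,
    b.coe_toBasis_repr_apply, b.repr_apply_apply]

lemma contract_gauss {V : Type*} [NormedAddCommGroup V]
    [InnerProductSpace ℝ V] [FiniteDimensional ℝ V] (A : V →ₗ[ℝ] V)
    (hA : ∀ X Y : V, ⟪A X, Y⟫ = ⟪X, A Y⟫) (X W : V) :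
    ∑ i, gaussTensor A X (stdOrthonormalBasis ℝ V i) (stdOrthonormalBasis ℝ V i) W
      = LinearMap.trace ℝ V A * ⟪A X, W⟫ - ⟪A (A X), W⟫ := by
  set b := stdOrthonormalBasis ℝ V
  simp only [gaussTensor]
  rw [Finset.sum_sub_distrib]
  congr 1
  · rw [trace_eq_sum_inner', Finset.sum_mul]
    refine Finset.sum_congr rfl fun i _ => ?_
    rw [mul_comm, ← hA]
  · calc ∑ i, ⟪A X, b i⟫ * ⟪A (b i), W⟫
        = ∑ i, ⟪A X, b i⟫ * ⟪b i, A W⟫ := by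
          refine Finset.sum_congr rfl fun i _ => ?_; rw [hA (b i) W]
      _ = ⟪A X, A W⟫ := b.sum_inner_mul_inner _ _
      _ = ⟪A (A X), W⟫ := (hA (A X) W).symm ▸ rfl

/-- In the adapted frames, the shape operators in the mean curvature directions
coincide, and the trace-free shape operators are trace free with equal squares. -/
theorem adapted_frames_shape_operators
    {V : Type*} [NormedAddCommGroup V] [InnerProductSpace ℝ V]
    [FiniteDimensional ℝ V]
    (A₁ A₂ B₁ B₂ : V →ₗ[ℝ] V)
    (hA₁ : ∀ X Y : V, ⟪A₁ X, Y⟫ = ⟪X, A₁ Y⟫)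
    (hA₂ : ∀ X Y : V, ⟪A₂ X, Y⟫ = ⟪X, A₂ Y⟫)
    (hB₁ : ∀ X Y : V, ⟪B₁ X, Y⟫ = ⟪X, B₁ Y⟫)
    (hB₂ : ∀ X Y : V, ⟪B₂ X, Y⟫ = ⟪X, B₂ Y⟫)
    (hGauss : ∀ X Y Z W : V,
      gaussTensor A₁ X Y Z W + gaussTensor A₂ X Y Z W =
        gaussTensor B₁ X Y Z W + gaussTensor B₂ X Y Z W)
    (hIII : A₁ ∘ₗ A₁ + A₂ ∘ₗ A₂ = B₁ ∘ₗ B₁ + B₂ ∘ₗ B₂)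
    (μ : ℝ)
    (hμ : μ = Real.sqrt ((LinearMap.trace ℝ V A₁) ^ 2
      + (LinearMap.trace ℝ V A₂) ^ 2))
    (hμ0 : μ ≠ 0)
    (Aη Aξ Bη Bξ : V →ₗ[ℝ] V)
    (hAη : Aη = μ⁻¹ • ((LinearMap.trace ℝ V A₁) • A₁
      + (LinearMap.trace ℝ V A₂) • A₂))
    (hAξ : Aξ = μ⁻¹ • ((LinearMap.trace ℝ V A₁) • A₂
      - (LinearMap.trace ℝ V A₂) • A₁))
    (hBη : Bη = μ⁻¹ • ((LinearMap.trace ℝ V B₁) • B₁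
      + (LinearMap.trace ℝ V B₂) • B₂))
    (hBξ : Bξ = μ⁻¹ • ((LinearMap.trace ℝ V B₁) • B₂
      - (LinearMap.trace ℝ V B₂) • B₁)) :
    Aη = Bη ∧ LinearMap.trace ℝ V Aξ = 0 ∧ LinearMap.trace ℝ V Bξ = 0 ∧
      Aξ ∘ₗ Aξ = Bξ ∘ₗ Bξ := by
  set a₁ := LinearMap.trace ℝ V A₁ with ha₁
  set a₂ := LinearMap.trace ℝ V A₂ with ha₂
  set b₁ := LinearMap.trace ℝ V B₁ with hb₁
  set b₂ := LinearMap.trace ℝ V B₂ with hb₂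
  -- contracted Gauss equation
  have hsum : ∀ X W : V,
      a₁ * ⟪A₁ X, W⟫ - ⟪A₁ (A₁ X), W⟫ + (a₂ * ⟪A₂ X, W⟫ - ⟪A₂ (A₂ X), W⟫)
      = b₁ * ⟪B₁ X, W⟫ - ⟪B₁ (B₁ X), W⟫ + (b₂ * ⟪B₂ X, W⟫ - ⟪B₂ (B₂ X), W⟫) := by
    intro X W
    rw [← contract_gauss A₁ hA₁ X W, ← contract_gauss A₂ hA₂ X W,
      ← contract_gauss B₁ hB₁ X W, ← contract_gauss B₂ hB₂ X W,
      ← Finset.sum_add_distrib, ← Finset.sum_add_distrib]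
    exact Finset.sum_congr rfl fun i _ => hGauss X _ _ W
  have hIII' : ∀ X W : V, ⟪A₁ (A₁ X), W⟫ + ⟪A₂ (A₂ X), W⟫
      = ⟪B₁ (B₁ X), W⟫ + ⟪B₂ (B₂ X), W⟫ := by
    intro X W
    have := congrArg (fun f : V →ₗ[ℝ] V => ⟪f X, W⟫) hIII
    simpa [inner_add_left] using this
  have hS : a₁ • A₁ + a₂ • A₂ = b₁ • B₁ + b₂ • B₂ := by
    ext X
    apply ext_inner_right ℝ
    intro W
    simp only [LinearMap.add_apply, LinearMap.smul_apply, inner_add_left,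
      real_inner_smul_left]
    have h1 := hsum X W
    have h2 := hIII' X W
    linarith
  have hane : a₁ ^ 2 + a₂ ^ 2 ≠ 0 := by
    intro h; exact hμ0 (by rw [hμ, h, Real.sqrt_zero])
  have hμsq : μ ^ 2 = a₁ ^ 2 + a₂ ^ 2 := by
    rw [hμ, Real.sq_sqrt (by positivity)]
  have htrS : a₁ ^ 2 + a₂ ^ 2 = b₁ ^ 2 + b₂ ^ 2 := by
    have := congrArg (LinearMap.trace ℝ V) hS
    simpa [map_add, map_smul, smul_eq_mul, sq, ← ha₁, ← ha₂, ← hb₁, ← hb₂] using this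
  refine ⟨by rw [hAη, hBη, hS], ?_, ?_, ?_⟩
  · rw [hAξ, map_smul, map_sub, map_smul, map_smul, ← ha₂, ← ha₁]
    simp only [smul_eq_mul]; ring
  · rw [hBξ, map_smul, map_sub, map_smul, map_smul, ← hb₂, ← hb₁]
    simp only [smul_eq_mul]; ring
  · have expandA : (a₁ • A₂ - a₂ • A₁) ∘ₗ (a₁ • A₂ - a₂ • A₁)
        = (a₁ ^ 2 + a₂ ^ 2) • (A₁ ∘ₗ A₁ + A₂ ∘ₗ A₂)
          - (a₁ • A₁ + a₂ • A₂) ∘ₗ (a₁ • A₁ + a₂ • A₂) := by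
      simp only [LinearMap.add_comp, LinearMap.comp_add, LinearMap.sub_comp,
        LinearMap.comp_sub, LinearMap.smul_comp, LinearMap.comp_smul, smul_add,
        smul_smul, smul_sub]
      module
    have expandB : (b₁ • B₂ - b₂ • B₁) ∘ₗ (b₁ • B₂ - b₂ • B₁)
        = (b₁ ^ 2 + b₂ ^ 2) • (B₁ ∘ₗ B₁ + B₂ ∘ₗ B₂)
          - (b₁ • B₁ + b₂ • B₂) ∘ₗ (b₁ • B₁ + b₂ • B₂) := by
      simp only [LinearMap.add_comp, LinearMap.comp_add, LinearMap.sub_comp,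
        LinearMap.comp_sub, LinearMap.smul_comp, LinearMap.comp_smul, smul_add,
        smul_smul, smul_sub]
      module
    rw [hAξ, hBξ, LinearMap.smul_comp, LinearMap.comp_smul,
      LinearMap.smul_comp, LinearMap.comp_smul, expandA, expandB,
      hIII, hS, htrS]
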